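/- arXiv:2411.02234 — 7 statements merged into one kernel-verified Lean document; each statement's English description precedes it below -/
import Mathlib

section
/- The Lovász extension is well defined: for every x : Fin m → ℝ and any two permutations σ and τ of Fin m that are sorting for x, the two sums Σ_{i=1}^m x(σ(i))·(F(Y_i^σ) − F(Y_{i−1}^σ)) and Σ_{i=1}^m x(τ(i))·(F(Y_i^τ) − F(Y_{i−1}^τ)) are equal (even when x has repeated coordinates). -/
/-- A permutation `σ` is *sorting* for `x` if it arranges the coordinates of `x`
in descending order: `x (σ 1) ≥ x (σ 2) ≥ … ≥ x (σ m)`. -/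
def Sorting {m : ℕ} (x : Fin m → ℝ) (σ : Equiv.Perm (Fin m)) : Prop :=
  ∀ i j : Fin m, i ≤ j → x (σ j) ≤ x (σ i)

/-- `Yset σ k = {σ 1, …, σ k}`, the first `k` elements in the order given by `σ`
(0-indexed: the images of the first `k` indices). -/
def Yset {m : ℕ} (σ : Equiv.Perm (Fin m)) (k : ℕ) : Finset (Fin m) :=
  (Finset.univ.filter fun j : Fin m => (j : ℕ) < k).image σ

/-- The candidate value `Σ_{i=1}^m x(σ(i)) · (F(Y_i^σ) − F(Y_{i−1}^σ))` of the
Lovász extension computed with the sorting permutation `σ`. -/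
noncomputable def lovaszSum {m : ℕ} (F : Finset (Fin m) → ℝ) (x : Fin m → ℝ)
    (σ : Equiv.Perm (Fin m)) : ℝ :=
  ∑ i : Fin m, x (σ i) * (F (Yset σ ((i : ℕ) + 1)) - F (Yset σ (i : ℕ)))

open Finset

/-- A downward-closed subset of `Fin m` is an initial segment. -/
lemma down_closed_iff {m : ℕ} (A : Finset (Fin m))
    (h : ∀ i j : Fin m, i ≤ j → j ∈ A → i ∈ A) (i : Fin m) :
    i ∈ A ↔ (i : ℕ) < A.card := by
  constructor
  · intro hi
    have hsub : Finset.Iic i ⊆ A := fun j hj => h j i (Finset.mem_Iic.mp hj) hi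
    have := Finset.card_le_card hsub
    rw [Fin.card_Iic] at this
    omega
  · intro hi
    by_contra hni
    have hsub : A ⊆ Finset.Iio i := by
      intro j hj
      rw [Finset.mem_Iio]
      by_contra hji
      exact hni (h i j (le_of_not_gt hji) hj)
    have := Finset.card_le_card hsub
    rw [Fin.card_Iio] at this
    omega

lemma image_filter_perm {m : ℕ} (σ : Equiv.Perm (Fin m)) (p : Fin m → Prop)
    [DecidablePred p] :
    (univ.filter fun i => p (σ i)).image σ = univ.filter p := by
  ext j
  simp only [mem_image, mem_filter, mem_univ, true_and]
  constructor
  · rintro ⟨i, hi, rfl⟩; exact hi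
  · intro hj; exact ⟨σ.symm j, by simpa using hj, by simp⟩

lemma lovaszSum_eq {m : ℕ} (F : Finset (Fin m) → ℝ) (x : Fin m → ℝ)
    (σ : Equiv.Perm (Fin m)) (hσ : ∀ i j : Fin m, i ≤ j → x (σ j) ≤ x (σ i)) :
    (∑ i : Fin m, x (σ i) * (F ((univ.filter fun j : Fin m => (j:ℕ) < (i:ℕ)+1).image σ)
        - F ((univ.filter fun j : Fin m => (j:ℕ) < (i:ℕ)).image σ)))
      = ∑ t ∈ Finset.image x univ,
          t * (F (univ.filter fun j => t ≤ x j) - F (univ.filter fun j => t < x j)) := by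
  rcases Nat.eq_zero_or_pos m with rfl | hm0
  · simp
  -- group by value
  rw [← Finset.sum_fiberwise_of_maps_to (g := fun i => x (σ i)) (fun i _ => mem_image_of_mem x (mem_univ (σ i)))]
  refine Finset.sum_congr rfl fun t _ => ?_
  -- for fixed t
  set a := (univ.filter fun j : Fin m => t < x j).card with ha
  set b := (univ.filter fun j : Fin m => t ≤ x j).card with hb
  have hab : a ≤ b := Finset.card_le_card (by
    intro j hj; simp only [mem_filter] at *; exact ⟨hj.1, le_of_lt hj.2⟩)
  have hbm : b ≤ m := by
    have := Finset.card_le_card (Finset.subset_univ (univ.filter fun j : Fin m => t ≤ x j))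
    simpa using this
  -- characterize the fibers via initial segments
  have hcard_lt : (univ.filter fun i : Fin m => t < x (σ i)).card = a := by
    rw [ha, ← image_filter_perm σ (fun j => t < x j),
      Finset.card_image_of_injective _ σ.injective]
  have hcard_le : (univ.filter fun i : Fin m => t ≤ x (σ i)).card = b := by
    rw [hb, ← image_filter_perm σ (fun j => t ≤ x j),
      Finset.card_image_of_injective _ σ.injective]
  have hlt : ∀ i : Fin m, t < x (σ i) ↔ (i : ℕ) < a := by
    intro i
    have hd : ∀ i j : Fin m, i ≤ j → j ∈ (univ.filter fun i => t < x (σ i)) →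
        i ∈ (univ.filter fun i => t < x (σ i)) := by
      intro i j hij hj
      simp only [mem_filter, mem_univ, true_and] at *
      exact lt_of_lt_of_le hj (hσ i j hij)
    have h := down_closed_iff _ hd i
    rw [hcard_lt] at h
    simpa using h
  have hle : ∀ i : Fin m, t ≤ x (σ i) ↔ (i : ℕ) < b := by
    intro i
    have hd : ∀ i j : Fin m, i ≤ j → j ∈ (univ.filter fun i => t ≤ x (σ i)) →
        i ∈ (univ.filter fun i => t ≤ x (σ i)) := by
      intro i j hij hj
      simp only [mem_filter, mem_univ, true_and] at *
      exact le_trans hj (hσ i j hij)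
    have h := down_closed_iff _ hd i
    rw [hcard_le] at h
    simpa using h
  -- the level sets
  have hYa : (univ.filter fun j : Fin m => (j:ℕ) < a).image σ
      = univ.filter fun j => t < x j := by
    rw [← image_filter_perm σ (fun j => t < x j)]
    congr 1
    ext i; simp [hlt i]
  have hYb : (univ.filter fun j : Fin m => (j:ℕ) < b).image σ
      = univ.filter fun j => t ≤ x j := by
    rw [← image_filter_perm σ (fun j => t ≤ x j)]
    congr 1
    ext i; simp [hle i]
  -- the fiber is Ico a b
  have hfiber : (univ.filter fun i : Fin m => x (σ i) = t)
      = univ.filter fun i : Fin m => a ≤ (i:ℕ) ∧ (i:ℕ) < b := by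
    ext i
    simp only [mem_filter, mem_univ, true_and]
    constructor
    · intro h
      refine ⟨?_, (hle i).mp h.ge⟩
      by_contra hc
      exact absurd ((hlt i).mpr (lt_of_not_ge hc)) (by simp [h])
    · rintro ⟨h1, h2⟩
      have := (hle i).mpr h2
      have h3 := (hlt i).not.mpr (by omega)
      linarith [not_lt.mp h3]
  rw [hfiber]
  -- factor out t and telescope
  have hval : ∀ i ∈ (univ.filter fun i : Fin m => a ≤ (i:ℕ) ∧ (i:ℕ) < b),
      x (σ i) = t := by
    intro i hi
    simp only [mem_filter, mem_univ, true_and] at hi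
    have := (hle i).mpr hi.2
    have h3 := (hlt i).not.mpr (by omega)
    linarith [not_lt.mp h3]
  calc ∑ i ∈ (univ.filter fun i : Fin m => a ≤ (i:ℕ) ∧ (i:ℕ) < b),
        x (σ i) * (F ((univ.filter fun j : Fin m => (j:ℕ) < (i:ℕ)+1).image σ)
          - F ((univ.filter fun j : Fin m => (j:ℕ) < (i:ℕ)).image σ))
      = ∑ i ∈ (univ.filter fun i : Fin m => a ≤ (i:ℕ) ∧ (i:ℕ) < b),
        t * (F ((univ.filter fun j : Fin m => (j:ℕ) < (i:ℕ)+1).image σ)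
          - F ((univ.filter fun j : Fin m => (j:ℕ) < (i:ℕ)).image σ)) := by
        exact Finset.sum_congr rfl fun i hi => by rw [hval i hi]
    _ = ∑ k ∈ Finset.Ico a b,
        t * (F ((univ.filter fun j : Fin m => (j:ℕ) < k+1).image σ)
          - F ((univ.filter fun j : Fin m => (j:ℕ) < k).image σ)) := by
        refine Finset.sum_nbij' (fun i => (i : ℕ)) (fun k => ⟨k % m, Nat.mod_lt _ hm0⟩) ?_ ?_ ?_ ?_ ?_
        · intro i hi; simp only [mem_filter, mem_univ, true_and] at hi
          exact Finset.mem_Ico.mpr hi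
        · intro k hk; simp only [Finset.mem_Ico] at hk
          simp only [mem_filter, mem_univ, true_and]
          have : k < m := lt_of_lt_of_le hk.2 hbm
          rw [Nat.mod_eq_of_lt this]; omega
        · intro i hi; ext; simp only [mem_filter, mem_univ, true_and] at hi
          simp; rw [Nat.mod_eq_of_lt (i.isLt)]
        · intro k hk; simp only [Finset.mem_Ico] at hk
          have : k < m := lt_of_lt_of_le hk.2 hbm
          simp [Nat.mod_eq_of_lt this]
        · intro i hi; rfl
    _ = t * ∑ k ∈ Finset.Ico a b,
        (F ((univ.filter fun j : Fin m => (j:ℕ) < k+1).image σ)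
          - F ((univ.filter fun j : Fin m => (j:ℕ) < k).image σ)) := by
        rw [Finset.mul_sum]
    _ = t * (F ((univ.filter fun j : Fin m => (j:ℕ) < b).image σ)
          - F ((univ.filter fun j : Fin m => (j:ℕ) < a).image σ)) := by
        congr 1
        rw [Finset.sum_Ico_eq_sub _ hab, Finset.sum_range_sub
          (fun k => F ((univ.filter fun j : Fin m => (j:ℕ) < k).image σ)),
          Finset.sum_range_sub (fun k => F ((univ.filter fun j : Fin m => (j:ℕ) < k).image σ))]
        ring
    _ = t * (F (univ.filter fun j => t ≤ x j) - F (univ.filter fun j => t < x j)) := by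
        rw [hYa, hYb]


/-- The Lovász extension is well defined: any two sorting permutations for `x`
give the same value (even when `x` has repeated coordinates). -/
theorem lovasz_extension_well_defined (m : ℕ) (hm : 1 ≤ m)
    (F : Finset (Fin m) → ℝ) (hF : F ∅ = 0)
    (x : Fin m → ℝ) (σ τ : Equiv.Perm (Fin m))
    (hσ : Sorting x σ) (hτ : Sorting x τ) :
    lovaszSum F x σ = lovaszSum F x τ := by
  unfold lovaszSum Yset
  rw [lovaszSum_eq F x σ hσ, lovaszSum_eq F x τ hτ]
end

section
/- (Lovász) The Lovász extension F̃ of F is a convex function on ℝ^m if and only if F is submodular. -/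
/-- `F` is submodular: `F(X ∪ {x₁}) + F(X ∪ {x₂}) ≥ F(X) + F(X ∪ {x₁, x₂})`
for every `X` and all distinct `x₁, x₂ ∉ X`. -/
def Submodular {m : ℕ} (F : Finset (Fin m) → ℝ) : Prop :=
  ∀ (X : Finset (Fin m)) (x₁ x₂ : Fin m), x₁ ≠ x₂ → x₁ ∉ X → x₂ ∉ X →
    F X + F (insert x₁ (insert x₂ X)) ≤ F (insert x₁ X) + F (insert x₂ X)

namespace Lovasz
variable {m : ℕ}

lemma mem_Yset' (σ : Equiv.Perm (Fin m)) (k : ℕ) (j : Fin m) :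
    j ∈ Yset σ k ↔ ((σ.symm j : ℕ) < k) := by
  simp only [Yset, Finset.mem_image, Finset.mem_filter, Finset.mem_univ, true_and]
  constructor
  · rintro ⟨a, ha, rfl⟩; simpa using ha
  · intro h; exact ⟨σ.symm j, h, by simp⟩

lemma mem_Yset (σ : Equiv.Perm (Fin m)) (k : ℕ) (i : Fin m) :
    σ i ∈ Yset σ k ↔ ((i : ℕ) < k) := by
  rw [mem_Yset']; simp

lemma Yset_zero (σ : Equiv.Perm (Fin m)) : Yset σ 0 = ∅ := by
  ext j; simp [mem_Yset']

lemma Yset_succ (σ : Equiv.Perm (Fin m)) {k : ℕ} (hk : k < m) :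
    Yset σ (k + 1) = insert (σ ⟨k, hk⟩) (Yset σ k) := by
  ext j; rw [mem_Yset', Finset.mem_insert, mem_Yset']
  constructor
  · intro h
    rcases Nat.lt_succ_iff_lt_or_eq.mp h with h | h
    · exact Or.inr h
    · left
      have : σ.symm j = ⟨k, hk⟩ := Fin.ext h
      rw [← this]; simp
  · rintro (rfl | h)
    · simp [Nat.lt_succ_iff]
    · exact h.trans (Nat.lt_succ_self k)

lemma Yset_univ (σ : Equiv.Perm (Fin m)) {k : ℕ} (hk : m ≤ k) :
    Yset σ k = Finset.univ := by
  ext j; simp [mem_Yset', lt_of_lt_of_le (σ.symm j).isLt hk]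

lemma card_Yset (σ : Equiv.Perm (Fin m)) {k : ℕ} (hk : k ≤ m) :
    (Yset σ k).card = k := by
  rw [Yset, Finset.card_image_of_injective _ σ.injective, Finset.card_filter]
  rw [Fin.sum_univ_eq_sum_range (fun i => if i < k then 1 else 0) m,
    ← Finset.sum_filter]
  have : (Finset.range m).filter (fun i => i < k) = Finset.range k := by
    ext i; simp; omega
  simp [this]

lemma Yset_mono (σ : Equiv.Perm (Fin m)) {k l : ℕ} (h : k ≤ l) :
    Yset σ k ⊆ Yset σ l := by
  intro j hj; rw [mem_Yset'] at *; omega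

lemma exists_sorting (z : Fin m → ℝ) : ∃ σ, Sorting z σ := by
  refine ⟨Tuple.sort (-z), fun i j hij => ?_⟩
  have := Tuple.monotone_sort (-z) hij
  simpa using this

variable {F : Finset (Fin m) → ℝ}

lemma dimin (hsub : Submodular F) (A : Finset (Fin m)) (e : Fin m) :
    ∀ B : Finset (Fin m), A ⊆ B → e ∉ B →
      F (insert e B) - F B ≤ F (insert e A) - F A := by
  intro B
  induction B using Finset.strongInductionOn with
  | _ B ih =>
    intro hAB heB
    by_cases hBA : B ⊆ A
    · rw [Finset.Subset.antisymm hAB hBA]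
    · obtain ⟨b, hbB, hbA⟩ := Finset.not_subset.mp hBA
      have hsubB' : B.erase b ⊂ B := Finset.erase_ssubset hbB
      have hAB' : A ⊆ B.erase b := fun a ha =>
        Finset.mem_erase.mpr ⟨fun h => hbA (h ▸ ha), hAB ha⟩
      have heB' : e ∉ B.erase b := fun h => heB (Finset.mem_of_mem_erase h)
      have hne : e ≠ b := fun h => heB (h ▸ hbB)
      have hbB' : b ∉ B.erase b := Finset.notMem_erase b B
      have key := hsub (B.erase b) e b hne heB' hbB'
      rw [Finset.insert_erase hbB] at key
      have := ih (B.erase b) hsubB' hAB' heB'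
      linarith

/-- marginal vector of `σ`. -/
noncomputable def gvec (F : Finset (Fin m) → ℝ) (σ : Equiv.Perm (Fin m)) : Fin m → ℝ :=
  fun j => F (Yset σ ((σ.symm j : ℕ) + 1)) - F (Yset σ (σ.symm j : ℕ))

lemma sum_gvec (hF : F ∅ = 0) (σ : Equiv.Perm (Fin m)) (k : ℕ) :
    ∑ j ∈ Yset σ k, gvec F σ j = F (Yset σ k) := by
  induction k with
  | zero => simp [Yset_zero, hF]
  | succ k ih =>
    by_cases hk : k < m
    · rw [Yset_succ σ hk, Finset.sum_insert (by simp [mem_Yset])]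
      rw [ih]
      have : gvec F σ (σ ⟨k, hk⟩) = F (Yset σ (k + 1)) - F (Yset σ k) := by
        simp [gvec]
      rw [this, Yset_succ σ hk]
      ring
    · have h1 : Yset σ (k + 1) = Yset σ k := by
        rw [Yset_univ σ (by omega), Yset_univ σ (by omega)]
      rw [h1, ih]

lemma edmonds (hsub : Submodular F) (hF : F ∅ = 0) (σ : Equiv.Perm (Fin m))
    (S : Finset (Fin m)) : ∑ j ∈ S, gvec F σ j ≤ F S := by
  induction S using Finset.strongInductionOn with
  | _ S ih =>
    rcases Finset.eq_empty_or_nonempty S with rfl | hS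
    · simp [hF]
    · set I := S.image σ.symm with hI
      have hIne : I.Nonempty := hS.image _
      set i := I.max' hIne with hi
      have hiI : i ∈ I := I.max'_mem hIne
      obtain ⟨s, hsS, hsi⟩ := Finset.mem_image.mp hiI
      set e := σ i with he
      have heS : e ∈ S := by rw [he, ← hsi]; simpa using hsS
      have hSS : S.erase e ⊂ S := Finset.erase_ssubset heS
      have hsub1 : S.erase e ⊆ Yset σ (i : ℕ) := by
        intro a ha
        obtain ⟨hane, haS⟩ := Finset.mem_erase.mp ha
        rw [mem_Yset']
        have hle : σ.symm a ≤ i := I.le_max' _ (Finset.mem_image_of_mem _ haS)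
        have : σ.symm a ≠ i := by
          intro h
          apply hane
          rw [he, ← h]; simp
        have := lt_of_le_of_ne hle this
        exact this
      have heY : e ∉ Yset σ (i : ℕ) := by
        rw [mem_Yset', he]; simp
      have hd := dimin hsub (S.erase e) e (Yset σ (i : ℕ)) hsub1 heY
      have h1 : insert e (Yset σ (i : ℕ)) = Yset σ ((i : ℕ) + 1) := by
        rw [Yset_succ σ i.isLt]
      have h2 : insert e (S.erase e) = S := Finset.insert_erase heS
      rw [h1, h2] at hd
      have hge : gvec F σ e = F (Yset σ ((i : ℕ) + 1)) - F (Yset σ (i : ℕ)) := by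
        simp [gvec, he]
      have hsum : ∑ j ∈ S, gvec F σ j = gvec F σ e + ∑ j ∈ S.erase e, gvec F σ j :=
        (Finset.add_sum_erase _ _ heS).symm
      have := ih (S.erase e) hSS
      rw [hsum, hge]
      linarith

lemma abel_nonneg (n : ℕ) (a D : ℕ → ℝ) (hD0 : D 0 = 0) (hDn : D n = 0)
    (hDpos : ∀ k, 0 ≤ D k) (hmono : ∀ i, i + 1 < n → a (i + 1) ≤ a i) :
    0 ≤ ∑ i ∈ Finset.range n, a i * (D (i + 1) - D i) := by
  have hshift : ∑ i ∈ Finset.range n, (a (i + 1) * D (i + 1) - a i * D i) =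
      a n * D n - a 0 * D 0 := Finset.sum_range_sub (fun i => a i * D i) n
  have h1 : ∑ i ∈ Finset.range n, a i * (D (i + 1) - D i) =
      (∑ i ∈ Finset.range n, (a i - a (i + 1)) * D (i + 1)) +
      ∑ i ∈ Finset.range n, (a (i + 1) * D (i + 1) - a i * D i) := by
    rw [← Finset.sum_add_distrib]
    exact Finset.sum_congr rfl fun i _ => by ring
  rw [h1, hshift, hD0, hDn]
  have : 0 ≤ ∑ i ∈ Finset.range n, (a i - a (i + 1)) * D (i + 1) := by
    apply Finset.sum_nonneg
    intro i hi
    rw [Finset.mem_range] at hi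
    rcases Nat.lt_or_ge (i + 1) n with h | h
    · exact mul_nonneg (by linarith [hmono i h]) (hDpos _)
    · have : i + 1 = n := by omega
      rw [this, hDn, mul_zero]
  linarith

/-- coordinates of `x` in `σ`-order, as an ℕ-indexed sequence. -/
noncomputable def avec (x : Fin m → ℝ) (σ : Equiv.Perm (Fin m)) : ℕ → ℝ :=
  fun i => if h : i < m then x (σ ⟨i, h⟩) else 0

lemma lovaszSum_eq_range (F : Finset (Fin m) → ℝ) (x : Fin m → ℝ) (σ : Equiv.Perm (Fin m)) :
    lovaszSum F x σ = ∑ i ∈ Finset.range m,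
      avec x σ i * (F (Yset σ (i + 1)) - F (Yset σ i)) := by
  rw [lovaszSum, ← Fin.sum_univ_eq_sum_range
    (fun i => avec x σ i * (F (Yset σ (i + 1)) - F (Yset σ i))) m]
  exact Finset.sum_congr rfl fun i _ => by simp [avec, i.isLt]

lemma dot_eq_range (x y : Fin m → ℝ) (τ : Equiv.Perm (Fin m)) :
    ∑ j : Fin m, x j * y j = ∑ i ∈ Finset.range m,
      avec x τ i * ((∑ j ∈ Yset τ (i + 1), y j) - ∑ j ∈ Yset τ i, y j) := by
  have h1 : ∑ j : Fin m, x j * y j = ∑ i : Fin m, x (τ i) * y (τ i) :=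
    (Fintype.sum_equiv τ _ _ (fun i => rfl)).symm
  rw [h1, ← Fin.sum_univ_eq_sum_range
    (fun i => avec x τ i * ((∑ j ∈ Yset τ (i + 1), y j) - ∑ j ∈ Yset τ i, y j)) m]
  refine Finset.sum_congr rfl fun i _ => ?_
  have hs : ∑ j ∈ Yset τ ((i : ℕ) + 1), y j = y (τ i) + ∑ j ∈ Yset τ (i : ℕ), y j := by
    rw [Yset_succ τ i.isLt]
    exact Finset.sum_insert (by simp [mem_Yset])
  simp only [avec, i.isLt, dif_pos, Fin.eta, hs]
  ring

lemma greedy_opt (hsub : Submodular F) (hF : F ∅ = 0) (x : Fin m → ℝ)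
    (σ τ : Equiv.Perm (Fin m)) (hτ : Sorting x τ) :
    lovaszSum F x σ ≤ lovaszSum F x τ := by
  set P : ℕ → ℝ := fun k => ∑ j ∈ Yset τ k, gvec F σ j with hP
  set Q : ℕ → ℝ := fun k => F (Yset τ k) with hQ
  set D : ℕ → ℝ := fun k => Q k - P k with hD
  have h1 : lovaszSum F x σ = ∑ j : Fin m, x j * gvec F σ j := by
    rw [lovaszSum, ← Fintype.sum_equiv σ (fun i => x (σ i) * gvec F σ (σ i))
      (fun j => x j * gvec F σ j) (fun i => rfl)]
    exact Finset.sum_congr rfl fun i _ => by simp [gvec]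
  have h2 := dot_eq_range x (gvec F σ) τ
  have h3 := lovaszSum_eq_range F x τ
  have hD0 : D 0 = 0 := by simp [hD, hQ, hP, Yset_zero, hF]
  have hDm : D m = 0 := by
    have hPm : P m = F (Yset σ m) := by
      rw [hP]
      simp only
      rw [Yset_univ τ le_rfl, ← Yset_univ σ le_rfl, sum_gvec hF]
    simp only [hD, hQ, hPm, Yset_univ τ le_rfl, Yset_univ σ le_rfl]
    ring
  have hDpos : ∀ k, 0 ≤ D k := fun k => by
    have := edmonds hsub hF σ (Yset τ k)
    simp only [hD, hQ, hP]
    linarith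
  have hmono : ∀ i, i + 1 < m → avec x τ (i + 1) ≤ avec x τ i := by
    intro i hi
    have hi' : i < m := by omega
    simp only [avec, dif_pos hi, dif_pos hi']
    exact hτ ⟨i, hi'⟩ ⟨i + 1, hi⟩ (by simp [Fin.le_def])
  have habel := abel_nonneg m (avec x τ) D hD0 hDm hDpos hmono
  have hsplit : ∑ i ∈ Finset.range m, avec x τ i * (D (i + 1) - D i) =
      (∑ i ∈ Finset.range m, avec x τ i * (Q (i + 1) - Q i)) -
      ∑ i ∈ Finset.range m, avec x τ i * (P (i + 1) - P i) := by
    rw [← Finset.sum_sub_distrib]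
    exact Finset.sum_congr rfl fun i _ => by simp only [hD]; ring
  rw [hsplit] at habel
  rw [h1, h2]
  rw [h3]
  exact le_of_sub_nonneg (by exact habel)

lemma lovaszSum_linear (F : Finset (Fin m) → ℝ) (a b : ℝ) (x y : Fin m → ℝ)
    (σ : Equiv.Perm (Fin m)) :
    lovaszSum F (a • x + b • y) σ = a * lovaszSum F x σ + b * lovaszSum F y σ := by
  simp only [lovaszSum, Finset.mul_sum, ← Finset.sum_add_distrib]
  exact Finset.sum_congr rfl fun i _ => by
    simp only [Pi.add_apply, Pi.smul_apply, smul_eq_mul]; ring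

lemma Yset_of_level {z : Fin m → ℝ} {σ : Equiv.Perm (Fin m)} (hσ : Sorting z σ)
    (S : Finset (Fin m)) (hlt : ∀ j ∈ S, ∀ j' ∉ S, z j' < z j) :
    Yset σ S.card = S := by
  have hc : S.card ≤ m := by
    simpa using Finset.card_le_univ S
  have hcard : (Yset σ S.card).card = S.card := card_Yset σ hc
  have hsub : Yset σ S.card ⊆ S := by
    intro j hj
    by_contra hjS
    have hij : (σ.symm j : ℕ) < S.card := (mem_Yset' σ _ j).mp hj
    by_cases hall : ∀ s ∈ S, (σ.symm s : ℕ) < S.card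
    · have hSsub : S ⊆ Yset σ S.card := fun s hs => (mem_Yset' σ _ s).mpr (hall s hs)
      have : S = Yset σ S.card :=
        Finset.eq_of_subset_of_card_le hSsub (le_of_eq hcard)
      exact hjS (this ▸ hj)
    · push_neg at hall
      obtain ⟨s, hsS, hcs⟩ := hall
      have hle : σ.symm j ≤ σ.symm s := by
        rw [Fin.le_def]; omega
      have := hσ _ _ hle
      simp only [Equiv.apply_symm_apply] at this
      exact absurd (hlt s hsS j hjS) (by linarith)
  exact Finset.eq_of_subset_of_card_le hsub (le_of_eq hcard.symm)

lemma lovaszSum_step (F : Finset (Fin m) → ℝ) (x : Fin m → ℝ) (σ : Equiv.Perm (Fin m))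
    (c d : ℕ) (t : ℝ) (hcd : c ≤ d) (hdm : d ≤ m)
    (hval : ∀ i : Fin m, x (σ i) = if (i : ℕ) < c then 1 else if (i : ℕ) < d then t else 0) :
    lovaszSum F x σ = (F (Yset σ c) - F (Yset σ 0)) + t * (F (Yset σ d) - F (Yset σ c)) := by
  set q : ℕ → ℝ := fun k => F (Yset σ k) with hq
  have havec : ∀ i < m, avec x σ i = if i < c then 1 else if i < d then t else 0 := by
    intro i hi
    simp only [avec, dif_pos hi]
    exact hval ⟨i, hi⟩
  rw [lovaszSum_eq_range]
  rw [← Finset.sum_range_add_sum_Ico _ hdm, ← Finset.sum_range_add_sum_Ico _ hcd]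
  have e1 : ∑ i ∈ Finset.range c, avec x σ i * (q (i + 1) - q i) =
      ∑ i ∈ Finset.range c, (q (i + 1) - q i) := by
    refine Finset.sum_congr rfl fun i hi => ?_
    rw [Finset.mem_range] at hi
    rw [havec i (by omega), if_pos hi, one_mul]
  have e2 : ∑ i ∈ Finset.Ico c d, avec x σ i * (q (i + 1) - q i) =
      t * ∑ i ∈ Finset.Ico c d, (q (i + 1) - q i) := by
    rw [Finset.mul_sum]
    refine Finset.sum_congr rfl fun i hi => ?_
    rw [Finset.mem_Ico] at hi
    rw [havec i (by omega), if_neg (by omega), if_pos hi.2]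
  have e3 : ∑ i ∈ Finset.Ico d m, avec x σ i * (q (i + 1) - q i) = 0 := by
    refine Finset.sum_eq_zero fun i hi => ?_
    rw [Finset.mem_Ico] at hi
    rw [havec i hi.2, if_neg (by omega), if_neg (by omega), zero_mul]
  rw [e1, e2, e3, Finset.sum_range_sub (fun k => q k) c, Finset.sum_Ico_eq_sub _ hcd,
    Finset.sum_range_sub (fun k => q k) d, Finset.sum_range_sub (fun k => q k) c]
  ring

lemma lovaszSum_indicator (hF : F ∅ = 0) (S : Finset (Fin m))
    {σ : Equiv.Perm (Fin m)}
    (hσ : Sorting (fun j => if j ∈ S then (1 : ℝ) else 0) σ) :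
    lovaszSum F (fun j => if j ∈ S then (1 : ℝ) else 0) σ = F S := by
  set z : Fin m → ℝ := fun j => if j ∈ S then (1 : ℝ) else 0 with hz
  have hY : Yset σ S.card = S := by
    refine Yset_of_level hσ S fun j hj j' hj' => ?_
    simp [hz, hj, hj']
  have hval : ∀ i : Fin m, z (σ i) =
      if (i : ℕ) < S.card then 1 else if (i : ℕ) < S.card then (0:ℝ) else 0 := by
    intro i
    have hmem : σ i ∈ S ↔ (i : ℕ) < S.card := by
      have := mem_Yset σ S.card i; rwa [hY] at this
    by_cases h : (i : ℕ) < S.card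
    · simp [hz, h, hmem.mpr h]
    · have : σ i ∉ S := fun hh => h (hmem.mp hh)
      simp [hz, h, this]
  have := lovaszSum_step F z σ S.card S.card 0 le_rfl
    (by simpa using Finset.card_le_univ S) hval
  rw [this, hY, Yset_zero, hF]
  ring

lemma lovaszSum_mid (hF : F ∅ = 0) (X : Finset (Fin m)) (x₁ x₂ : Fin m)
    (hne : x₁ ≠ x₂) (h1 : x₁ ∉ X) (h2 : x₂ ∉ X)
    {σ : Equiv.Perm (Fin m)}
    (hσ : Sorting (fun j => if j ∈ X then (1 : ℝ)
      else if j ∈ insert x₁ (insert x₂ X) then 1/2 else 0) σ) :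
    lovaszSum F (fun j => if j ∈ X then (1 : ℝ)
      else if j ∈ insert x₁ (insert x₂ X) then 1/2 else 0) σ
      = F X + (1/2) * (F (insert x₁ (insert x₂ X)) - F X) := by
  set T : Finset (Fin m) := insert x₁ (insert x₂ X) with hT
  set w : Fin m → ℝ := fun j => if j ∈ X then (1 : ℝ) else if j ∈ T then 1/2 else 0 with hw
  have hXT : X ⊆ T := fun a ha => by simp [hT, ha]
  have hcT : T.card = X.card + 2 := by
    rw [hT, Finset.card_insert_of_notMem (by simp [hne, h1]),
      Finset.card_insert_of_notMem h2]
  have hYX : Yset σ X.card = X := by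
    refine Yset_of_level hσ X fun j hj j' hj' => ?_
    by_cases hj'T : j' ∈ T <;> simp [hw, hj, hj', hj'T] <;> norm_num
  have hYT : Yset σ (X.card + 2) = T := by
    rw [← hcT]
    refine Yset_of_level hσ T fun j hj j' hj' => ?_
    have hj'X : j' ∉ X := fun h => hj' (hXT h)
    by_cases hjX : j ∈ X <;> simp [hw, hj, hj', hjX, hj'X] <;> norm_num
  have hval : ∀ i : Fin m, w (σ i) =
      if (i : ℕ) < X.card then 1 else if (i : ℕ) < X.card + 2 then (1/2 : ℝ) else 0 := by
    intro i
    have hiX : σ i ∈ X ↔ (i : ℕ) < X.card := by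
      have := mem_Yset σ X.card i; rwa [hYX] at this
    have hiT : σ i ∈ T ↔ (i : ℕ) < X.card + 2 := by
      have := mem_Yset σ (X.card + 2) i; rwa [hYT] at this
    by_cases h : (i : ℕ) < X.card
    · simp [hw, h, hiX.mpr h]
    · have hX' : σ i ∉ X := fun hh => h (hiX.mp hh)
      by_cases h' : (i : ℕ) < X.card + 2
      · simp [hw, h, h', hX', hiT.mpr h']
      · have : σ i ∉ T := fun hh => h' (hiT.mp hh)
        simp [hw, h, h', hX', this]
  have hdm : X.card + 2 ≤ m := by
    rw [← hcT]; simpa using Finset.card_le_univ T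
  have := lovaszSum_step F w σ X.card (X.card + 2) (1/2) (by omega) hdm hval
  rw [this, hYX, hYT, Yset_zero, hF]
  ring

end Lovasz

open Lovasz in
/-- (Lovász) The Lovász extension `L` of `F` is convex iff `F` is submodular. -/
theorem lovasz_extension_convex_iff_submodular (m : ℕ) (hm : 1 ≤ m)
    (F : Finset (Fin m) → ℝ) (hF : F ∅ = 0)
    (L : (Fin m → ℝ) → ℝ)
    (hL : ∀ (x : Fin m → ℝ) (σ : Equiv.Perm (Fin m)), Sorting x σ →
      L x = lovaszSum F x σ) :
    ConvexOn ℝ Set.univ L ↔ Submodular F := by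
  constructor
  · intro hconv X x₁ x₂ hne h1 h2
    set S₁ : Finset (Fin m) := insert x₁ X with hS₁
    set S₂ : Finset (Fin m) := insert x₂ X with hS₂
    set T : Finset (Fin m) := insert x₁ (insert x₂ X) with hT
    set u : Fin m → ℝ := fun j => if j ∈ S₁ then (1 : ℝ) else 0 with hu
    set v : Fin m → ℝ := fun j => if j ∈ S₂ then (1 : ℝ) else 0 with hv
    set w : Fin m → ℝ := fun j => if j ∈ X then (1 : ℝ) else if j ∈ T then 1/2 else 0
      with hw
    obtain ⟨σu, hσu⟩ := exists_sorting u
    obtain ⟨σv, hσv⟩ := exists_sorting v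
    obtain ⟨σw, hσw⟩ := exists_sorting w
    have hLu : L u = F S₁ := by rw [hL u σu hσu]; exact lovaszSum_indicator hF S₁ hσu
    have hLv : L v = F S₂ := by rw [hL v σv hσv]; exact lovaszSum_indicator hF S₂ hσv
    have hLw : L w = F X + (1/2) * (F T - F X) := by
      rw [hL w σw hσw]; exact lovaszSum_mid hF X x₁ x₂ hne h1 h2 hσw
    have hwuv : w = (1/2 : ℝ) • u + (1/2 : ℝ) • v := by
      funext j
      simp only [hw, hu, hv, Pi.add_apply, Pi.smul_apply, smul_eq_mul]
      by_cases hjX : j ∈ X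
      · have hj1 : j ≠ x₁ := fun h => h1 (h ▸ hjX)
        have hj2 : j ≠ x₂ := fun h => h2 (h ▸ hjX)
        simp [hS₁, hS₂, hT, hjX, hj1, hj2]
        norm_num
      · by_cases hj1 : j = x₁
        · have hj2 : j ≠ x₂ := fun h => hne (hj1.symm.trans h)
          simp [hS₁, hS₂, hT, hjX, hj1, hj2, h1, hne]
        · by_cases hj2 : j = x₂
          · simp [hS₁, hS₂, hT, hjX, hj1, hj2, h2, hne.symm, Ne.symm hne]
          · simp [hS₁, hS₂, hT, hjX, hj1, hj2]
    have := hconv.2 (Set.mem_univ u) (Set.mem_univ v) (by norm_num : (0:ℝ) ≤ 1/2)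
      (by norm_num : (0:ℝ) ≤ 1/2) (by norm_num)
    rw [← hwuv] at this
    rw [hLw, hLu, hLv] at this
    simp only [smul_eq_mul] at this
    linarith
  · intro hsub
    refine ⟨convex_univ, fun {x} _ {y} _ a b ha hb hab => ?_⟩
    obtain ⟨σ, hσ⟩ := exists_sorting (a • x + b • y)
    obtain ⟨τx, hτx⟩ := exists_sorting x
    obtain ⟨τy, hτy⟩ := exists_sorting y
    rw [hL _ σ hσ, lovaszSum_linear, hL x τx hτx, hL y τy hτy]
    have h1 := greedy_opt hsub hF x σ τx hτx
    have h2 := greedy_opt hsub hF y σ τy hτy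
    simp only [smul_eq_mul]
    have := mul_le_mul_of_nonneg_left h1 ha
    have := mul_le_mul_of_nonneg_left h2 hb
    linarith
end

section
/- (Edmonds) Suppose F is submodular and F(∅) = 0. Then for every x : Fin m → ℝ, the value F̃(x) of the Lovász extension is the maximum of the linear functional y ↦ Σ_{s ∈ Fin m} x(s)·y(s) over the base polytope B_F, and this maximum is attained; i.e. F̃(x) is the greatest element of the set { Σ_s x(s)·y(s) : y ∈ B_F }. In particular F̃ is the support function of B_F. -/
/-- The base polytope of `F`: the points of the submodular polyhedron whose
coordinate sum equals `F(Fin m)`. -/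
def basePolytope {m : ℕ} (F : Finset (Fin m) → ℝ) : Set (Fin m → ℝ) :=
  {y | (∀ X : Finset (Fin m), ∑ s ∈ X, y s ≤ F X) ∧ ∑ s, y s = F Finset.univ}

/- ---------- auxiliary lemmas ---------- -/

lemma Yset_zero {m : ℕ} (σ : Equiv.Perm (Fin m)) : Yset σ 0 = ∅ := by
  simp [Yset]

lemma Yset_top {m : ℕ} (σ : Equiv.Perm (Fin m)) : Yset σ m = Finset.univ := by
  ext s
  simp only [Yset, Finset.mem_image, Finset.mem_filter, Finset.mem_univ, true_and]
  exact ⟨fun _ => trivial, fun _ => ⟨σ.symm s, (σ.symm s).isLt, σ.apply_symm_apply s⟩⟩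

lemma Yset_succ {m : ℕ} (σ : Equiv.Perm (Fin m)) (k : ℕ) (hk : k < m) :
    Yset σ (k + 1) = insert (σ ⟨k, hk⟩) (Yset σ k) := by
  have : (Finset.univ.filter fun j : Fin m => (j : ℕ) < k + 1)
      = insert (⟨k, hk⟩ : Fin m) (Finset.univ.filter fun j : Fin m => (j : ℕ) < k) := by
    ext j
    simp only [Finset.mem_filter, Finset.mem_univ, true_and, Finset.mem_insert,
      Nat.lt_succ_iff_lt_or_eq]
    constructor
    · rintro (h | h)
      · exact Or.inr h
      · exact Or.inl (Fin.ext h)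
    · rintro (h | h)
      · exact Or.inr (by rw [h])
      · exact Or.inl h
  rw [Yset, this, Finset.image_insert]
  rfl

lemma notMem_Yset {m : ℕ} (σ : Equiv.Perm (Fin m)) (k : ℕ) (hk : k < m) :
    σ ⟨k, hk⟩ ∉ Yset σ k := by
  simp only [Yset, Finset.mem_image, Finset.mem_filter, Finset.mem_univ, true_and]
  rintro ⟨j, hj, hje⟩
  have := σ.injective hje
  subst this
  simp at hj

/-- Diminishing returns form of submodularity. -/
lemma diminishing {m : ℕ} {F : Finset (Fin m) → ℝ} (hsub : Submodular F) :
    ∀ (B A : Finset (Fin m)) (e : Fin m), A ⊆ B → e ∉ B →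
      F A + F (insert e B) ≤ F (insert e A) + F B := by
  intro B
  induction B using Finset.strongInduction with
  | _ B ih =>
    intro A e hAB heB
    rcases eq_or_ne A B with rfl | hne
    · linarith
    · obtain ⟨u, huB, huA⟩ : ∃ u ∈ B, u ∉ A := by
        by_contra h
        push_neg at h
        exact hne (Finset.Subset.antisymm hAB h)
      have hsubB : B.erase u ⊂ B := Finset.erase_ssubset huB
      have hA' : A ⊆ B.erase u := fun a ha =>
        Finset.mem_erase.mpr ⟨fun h => huA (h ▸ ha), hAB ha⟩
      have he' : e ∉ B.erase u := fun h => heB (Finset.mem_of_mem_erase h)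
      have h1 := ih _ hsubB A e hA' he'
      have heu : e ≠ u := fun h => heB (h ▸ huB)
      have hu' : u ∉ B.erase u := Finset.notMem_erase u B
      have h2 := hsub (B.erase u) e u heu he' hu'
      rw [Finset.insert_erase huB] at h2
      linarith

/-- Abel-summation style key inequality. -/
lemma abel_key (a d : ℕ → ℝ) (m : ℕ)
    (ha : ∀ i, i + 1 < m → a (i + 1) ≤ a i) (hd : ∀ i, 0 ≤ d i) (hd0 : d 0 = 0) :
    ∀ n, n ≤ m → n ≠ 0 →
      a (n - 1) * d n ≤ ∑ i ∈ Finset.range n, a i * (d (i + 1) - d i) := by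
  intro n
  induction n with
  | zero => intro _ h; exact absurd rfl h
  | succ n ihn =>
    intro hnm _
    rcases Nat.eq_zero_or_pos n with rfl | hn
    · simp [hd0]
    · have h1 := ihn (le_of_lt (Nat.lt_of_lt_of_le (Nat.lt_succ_self n) hnm))
        hn.ne'
      rw [Finset.sum_range_succ]
      have han : a n ≤ a (n - 1) := by
        have h2 := ha (n - 1) (by omega)
        rwa [show n - 1 + 1 = n by omega] at h2
      have hdn := hd n
      have : (n + 1) - 1 = n := by omega
      rw [this]
      nlinarith [h1]

/-- (Edmonds) For a submodular `F` with `F ∅ = 0`, the Lovász extension at `x` is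
the attained maximum of `y ↦ Σ_s x s * y s` over the base polytope `B_F`;
i.e. the Lovász extension is the support function of `B_F`. -/
theorem lovasz_extension_support_function_of_base_polytope (m : ℕ) (hm : 1 ≤ m)
    (F : Finset (Fin m) → ℝ) (hF : F ∅ = 0) (hsub : Submodular F)
    (L : (Fin m → ℝ) → ℝ)
    (hL : ∀ (x : Fin m → ℝ) (σ : Equiv.Perm (Fin m)), Sorting x σ →
      L x = lovaszSum F x σ) :
    ∀ x : Fin m → ℝ,
      IsGreatest {z : ℝ | ∃ y ∈ basePolytope F, z = ∑ s, x s * y s} (L x) := by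
  intro x
  -- a sorting permutation
  set σ : Equiv.Perm (Fin m) := Tuple.sort (fun i => -x i) with hσdef
  have hσ : Sorting x σ := by
    intro i j hij
    have := Tuple.monotone_sort (fun i => -x i) hij
    simpa using this
  have hLx : L x = lovaszSum F x σ := hL x σ hσ
  set f : ℕ → ℝ := fun k => F (Yset σ k) with hfdef
  -- the greedy vertex
  set y₀ : Fin m → ℝ :=
    fun s => F (Yset σ ((σ.symm s : ℕ) + 1)) - F (Yset σ (σ.symm s : ℕ)) with hy₀def
  have hy₀σ : ∀ i : Fin m, y₀ (σ i) = f ((i : ℕ) + 1) - f (i : ℕ) := by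
    intro i; simp [hy₀def, hfdef]
  -- partial sums of y₀ over Yset telescope
  have hy₀sum : ∀ k, k ≤ m → ∑ s ∈ Yset σ k, y₀ s = f k - f 0 := by
    intro k hk
    induction k with
    | zero => simp [Yset_zero]
    | succ k ihk =>
      have hkm : k < m := hk
      rw [Yset_succ σ k hkm, Finset.sum_insert (notMem_Yset σ k hkm),
        ihk (le_of_lt hkm)]
      have : y₀ (σ ⟨k, hkm⟩) = f (k + 1) - f k := hy₀σ ⟨k, hkm⟩
      rw [this]; ring
  have hf0 : f 0 = 0 := by simp [hfdef, Yset_zero, hF]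
  have hfm : f m = F Finset.univ := by simp [hfdef, Yset_top]
  -- greedy constraint
  have hconstr : ∀ k, k ≤ m → ∀ X : Finset (Fin m),
      ∑ s ∈ X ∩ Yset σ k, y₀ s ≤ F (X ∩ Yset σ k) := by
    intro k
    induction k with
    | zero => intro _ X; simp [Yset_zero, hF]
    | succ k ihk =>
      intro hk X
      have hkm : k < m := hk
      set e := σ ⟨k, hkm⟩ with hedef
      rw [Yset_succ σ k hkm]
      by_cases heX : e ∈ X
      · have hXe : X ∩ insert e (Yset σ k) = insert e (X ∩ Yset σ k) := by
          rw [Finset.inter_comm, Finset.insert_inter_of_mem heX, Finset.inter_comm]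
        have heY : e ∉ X ∩ Yset σ k := fun h =>
          notMem_Yset σ k hkm (Finset.mem_of_mem_inter_right h)
        rw [hXe, Finset.sum_insert heY]
        have h1 := ihk (le_of_lt hkm) X
        have h2 := diminishing hsub (Yset σ k) (X ∩ Yset σ k) e
          Finset.inter_subset_right (notMem_Yset σ k hkm)
        have h3 : y₀ e = F (insert e (Yset σ k)) - F (Yset σ k) := by
          have := hy₀σ ⟨k, hkm⟩
          rw [← hedef] at this
          rw [this]
          simp only [hfdef]
          rw [Yset_succ σ k hkm, ← hedef]
        linarith
      · have hXe : X ∩ insert e (Yset σ k) = X ∩ Yset σ k := by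
          rw [Finset.inter_comm, Finset.insert_inter_of_notMem heX, Finset.inter_comm]
        rw [hXe]
        exact ihk (le_of_lt hkm) X
  -- y₀ is in the base polytope
  have hy₀mem : y₀ ∈ basePolytope F := by
    constructor
    · intro X
      have := hconstr m le_rfl X
      rwa [Yset_top, Finset.inter_univ] at this
    · have := hy₀sum m le_rfl
      rwa [Yset_top, hfm, hf0, sub_zero] at this
  -- the objective at y₀ equals the Lovász sum
  have hobj : ∑ s, x s * y₀ s = lovaszSum F x σ := by
    rw [← Equiv.sum_comp σ (fun s => x s * y₀ s)]
    unfold lovaszSum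
    refine Finset.sum_congr rfl fun i _ => ?_
    rw [hy₀σ i]
  constructor
  · exact ⟨y₀, hy₀mem, by rw [hobj, hLx]⟩
  · rintro z ⟨y, hy, rfl⟩
    rw [hLx]
    -- set up ℕ-indexed data
    have hmpos : 0 < m := hm
    set a : ℕ → ℝ := fun i => x (σ ⟨min i (m - 1), by omega⟩) with hadef
    set g : ℕ → ℝ := fun k => ∑ s ∈ Yset σ k, y s with hgdef
    set d : ℕ → ℝ := fun k => f k - g k with hddef
    have hamk : ∀ (i : ℕ) (h : i < m), a i = x (σ ⟨i, h⟩) := by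
      intro i h
      simp only [hadef]
      congr 1
      exact congrArg σ (Fin.ext (by simp; omega))
    have ha : ∀ i, i + 1 < m → a (i + 1) ≤ a i := by
      intro i h
      rw [hamk (i + 1) h, hamk i (by omega)]
      exact hσ ⟨i, by omega⟩ ⟨i + 1, h⟩ (by simp [Fin.le_def])
    have hd : ∀ i, 0 ≤ d i := by
      intro i
      have := hy.1 (Yset σ i)
      simp only [hddef, hfdef, hgdef]
      linarith
    have hd0 : d 0 = 0 := by
      simp [hddef, hgdef, hf0, Yset_zero]
    have hdm : d m = 0 := by
      have : g m = F Finset.univ := by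
        simp only [hgdef, Yset_top]
        exact hy.2
      simp [hddef, hfm, this]
    have key := abel_key a d m ha hd hd0 m le_rfl (by omega)
    rw [hdm, mul_zero] at key
    -- rewrite both sums over range m
    have hgdiff : ∀ (i : ℕ) (h : i < m), g (i + 1) - g i = y (σ ⟨i, h⟩) := by
      intro i h
      simp only [hgdef]
      rw [Yset_succ σ i h, Finset.sum_insert (notMem_Yset σ i h)]
      ring
    have hsplit : ∑ i ∈ Finset.range m, a i * (d (i + 1) - d i)
        = ∑ i ∈ Finset.range m, a i * (f (i + 1) - f i)
          - ∑ i ∈ Finset.range m, a i * (g (i + 1) - g i) := by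
      rw [← Finset.sum_sub_distrib]
      refine Finset.sum_congr rfl fun i _ => ?_
      simp only [hddef]; ring
    have hlov : lovaszSum F x σ = ∑ i ∈ Finset.range m, a i * (f (i + 1) - f i) := by
      unfold lovaszSum
      rw [Finset.sum_range fun i => a i * (f (i + 1) - f i)]
      refine Finset.sum_congr rfl fun i _ => ?_
      rw [hamk (i : ℕ) i.isLt]
    have hyobj : ∑ s, x s * y s = ∑ i ∈ Finset.range m, a i * (g (i + 1) - g i) := by
      rw [← Equiv.sum_comp σ (fun s => x s * y s),
        Finset.sum_range fun i => a i * (g (i + 1) - g i)]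
      refine Finset.sum_congr rfl fun i _ => ?_
      rw [hamk (i : ℕ) i.isLt, hgdiff (i : ℕ) i.isLt]
    rw [hsplit] at key
    rw [hyobj, hlov]
    linarith
end

section
/- The basecondary function is well defined: for every λ : Fin m → ℝ, the set of affine maps γ : ℝⁿ → ℝ for which the term T(λ,γ) is nonzero is finite. -/
open MeasureTheory

/-- The `n`-dimensional lattice volume of the convex hull of a set in `ℝⁿ`:
`n!` times its Lebesgue measure. -/
noncomputable def latticeVol (n : ℕ) (s : Set (Fin n → ℝ)) : ℝ :=
  (n.factorial : ℝ) * (volume (convexHull ℝ s)).toReal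

/-- The term `T(λ,γ)` of the basecondary function:
`γ(0) · (F{λ−γ∘A ≥ 0} − F{λ−γ∘A > 0}) · Vol(conv A{λ−γ∘A = max})`. -/
noncomputable def Tterm {n m : ℕ} (A : Fin m → (Fin n → ℝ)) (F : Finset (Fin m) → ℝ)
    (lam : Fin m → ℝ) (γ : (Fin n → ℝ) →ᵃ[ℝ] ℝ) : ℝ :=
  γ 0 *
    (F (Finset.univ.filter fun i => 0 ≤ lam i - γ (A i)) -
      F (Finset.univ.filter fun i => 0 < lam i - γ (A i))) *
    latticeVol n (A '' {i | ∀ j, lam j - γ (A j) ≤ lam i - γ (A i)})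

/-- An affine map into `ℝ` that is constant on a set with full affine span is
constant everywhere. -/
lemma affine_const_of_span_top {n : ℕ} (δ : (Fin n → ℝ) →ᵃ[ℝ] ℝ) (s : Set (Fin n → ℝ))
    (c : ℝ) (hs : affineSpan ℝ s = ⊤) (h : ∀ x ∈ s, δ x = c) : ∀ x, δ x = c := by
  intro x
  have hsub : s ⊆ (AffineSubspace.comap δ (affineSpan ℝ ({c} : Set ℝ)) : Set (Fin n → ℝ)) := by
    intro y hy
    rw [AffineSubspace.coe_comap, AffineSubspace.coe_affineSpan_singleton]
    exact h y hy
  have hle : affineSpan ℝ s ≤ AffineSubspace.comap δ (affineSpan ℝ ({c} : Set ℝ)) :=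
    affineSpan_le.mpr hsub
  rw [hs] at hle
  have hx : x ∈ AffineSubspace.comap δ (affineSpan ℝ ({c} : Set ℝ)) :=
    hle (AffineSubspace.mem_top ℝ _ x)
  have := hx
  rw [AffineSubspace.mem_comap] at this
  simpa [AffineSubspace.mem_affineSpan_singleton] using this

/-- The basecondary function is well defined: for every `λ`, only finitely many
affine maps `γ : ℝⁿ → ℝ` give a nonzero term `T(λ,γ)`. -/
theorem basecondary_term_support_finite (n m : ℕ) (hm : 1 < m)
    (A : Fin m → (Fin n → ℝ)) (hA : 1 ≤ n → Function.Injective A)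
    (F : Finset (Fin m) → ℝ) (lam : Fin m → ℝ) :
    {γ : (Fin n → ℝ) →ᵃ[ℝ] ℝ | Tterm A F lam γ ≠ 0}.Finite := by
  classical
  have hm0 : 0 < m := by omega
  set f : ((Fin n → ℝ) →ᵃ[ℝ] ℝ) → Finset (Fin m) × Fin m := fun γ =>
    (Finset.univ.filter (fun i => ∀ j, lam j - γ (A j) ≤ lam i - γ (A i)),
      if h : ∃ i, lam i - γ (A i) = 0 then h.choose else ⟨0, hm0⟩) with hf
  -- key facts from nonvanishing of the term
  have key : ∀ γ ∈ {γ : (Fin n → ℝ) →ᵃ[ℝ] ℝ | Tterm A F lam γ ≠ 0},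
      (∃ i, lam i - γ (A i) = 0) ∧
      affineSpan ℝ (A '' {i | ∀ j, lam j - γ (A j) ≤ lam i - γ (A i)}) = ⊤ := by
    intro γ hγ
    simp only [Set.mem_setOf_eq, Tterm] at hγ
    have hF : F (Finset.univ.filter fun i => 0 ≤ lam i - γ (A i)) -
        F (Finset.univ.filter fun i => 0 < lam i - γ (A i)) ≠ 0 := by
      intro h; apply hγ; rw [h]; ring
    have hV : latticeVol n (A '' {i | ∀ j, lam j - γ (A j) ≤ lam i - γ (A i)}) ≠ 0 := by
      intro h; apply hγ; rw [h]; ring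
    constructor
    · -- the two filters differ, so some value is exactly 0
      have hne : (Finset.univ.filter fun i => 0 ≤ lam i - γ (A i)) ≠
          (Finset.univ.filter fun i => 0 < lam i - γ (A i)) := by
        intro h; apply hF; rw [h]; ring
      have hsub : (Finset.univ.filter fun i => 0 < lam i - γ (A i)) ⊆
          (Finset.univ.filter fun i => 0 ≤ lam i - γ (A i)) := by
        intro i hi
        simp only [Finset.mem_filter, Finset.mem_univ, true_and] at hi ⊢
        exact le_of_lt hi
      obtain ⟨i, hi1, hi2⟩ := Finset.exists_of_ssubset (lt_of_le_of_ne hsub (Ne.symm hne))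
      simp only [Finset.mem_filter, Finset.mem_univ, true_and] at hi1 hi2
      exact ⟨i, le_antisymm (not_lt.mp hi2) hi1⟩
    · -- the volume is nonzero, so the affine span is everything
      by_contra h
      apply hV
      have hsub : convexHull ℝ (A '' {i | ∀ j, lam j - γ (A j) ≤ lam i - γ (A i)}) ⊆
          (affineSpan ℝ (A '' {i | ∀ j, lam j - γ (A j) ≤ lam i - γ (A i)}) :
            Set (Fin n → ℝ)) := convexHull_subset_affineSpan _
      have hz : volume (convexHull ℝ
          (A '' {i | ∀ j, lam j - γ (A j) ≤ lam i - γ (A i)})) = 0 :=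
        measure_mono_null hsub (Measure.addHaar_affineSubspace volume _ h)
      unfold latticeVol
      rw [hz]
      simp
  apply Set.Finite.of_finite_image (f := f) (Set.toFinite _)
  intro γ₁ hγ₁ γ₂ hγ₂ heq
  obtain ⟨hz₁, hspan₁⟩ := key γ₁ hγ₁
  obtain ⟨hz₂, hspan₂⟩ := key γ₂ hγ₂
  have h1 : f γ₁ = (Finset.univ.filter (fun i => ∀ j, lam j - γ₁ (A j) ≤ lam i - γ₁ (A i)),
      hz₁.choose) := by simp [hf, dif_pos hz₁]
  have h2 : f γ₂ = (Finset.univ.filter (fun i => ∀ j, lam j - γ₂ (A j) ≤ lam i - γ₂ (A i)),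
      hz₂.choose) := by simp [hf, dif_pos hz₂]
  rw [h1, h2, Prod.mk.injEq] at heq
  obtain ⟨hS, hi0⟩ := heq
  set i₀ := hz₁.choose with hi₀
  have hzero₁ : lam i₀ - γ₁ (A i₀) = 0 := hz₁.choose_spec
  have hzero₂ : lam i₀ - γ₂ (A i₀) = 0 := by
    have := hz₂.choose_spec
    rwa [← hi0] at this
  -- a common maximizer
  obtain ⟨iM, -, hiM⟩ := Finset.exists_max_image Finset.univ
    (fun i => lam i - γ₁ (A i)) ⟨⟨0, hm0⟩, Finset.mem_univ _⟩
  have hiM1 : ∀ j, lam j - γ₁ (A j) ≤ lam iM - γ₁ (A iM) := fun j => hiM j (Finset.mem_univ j)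
  have hSmem : ∀ i, (∀ j, lam j - γ₁ (A j) ≤ lam i - γ₁ (A i)) ↔
      (∀ j, lam j - γ₂ (A j) ≤ lam i - γ₂ (A i)) := by
    intro i
    have := Finset.ext_iff.mp hS i
    simpa using this
  have hiM2 : ∀ j, lam j - γ₂ (A j) ≤ lam iM - γ₂ (A iM) := (hSmem iM).mp hiM1
  set c₁ := lam iM - γ₁ (A iM) with hc₁
  set c₂ := lam iM - γ₂ (A iM) with hc₂
  -- γ₁ - γ₂ is constant c₂ - c₁ on the image of the argmax set
  have hconst : ∀ x ∈ A '' {i | ∀ j, lam j - γ₁ (A j) ≤ lam i - γ₁ (A i)},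
      (γ₁ - γ₂) x = c₂ - c₁ := by
    rintro x ⟨i, hi, rfl⟩
    have hd1 : lam i - γ₁ (A i) = c₁ := le_antisymm (hiM1 i) (hi iM)
    have hd2 : lam i - γ₂ (A i) = c₂ := le_antisymm (hiM2 i) ((hSmem i).mp hi iM)
    have : (γ₁ - γ₂) (A i) = γ₁ (A i) - γ₂ (A i) := by
      rw [AffineMap.coe_sub]; rfl
    rw [this]; linarith
  have hall : ∀ x, (γ₁ - γ₂) x = c₂ - c₁ :=
    affine_const_of_span_top _ _ _ hspan₁ hconst
  have hat : (γ₁ - γ₂) (A i₀) = γ₁ (A i₀) - γ₂ (A i₀) := by rw [AffineMap.coe_sub]; rfl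
  have hcc : c₂ - c₁ = 0 := by
    have := hall (A i₀); rw [hat] at this; linarith
  ext x
  have := hall x
  rw [hcc] at this
  have hx : (γ₁ - γ₂) x = γ₁ x - γ₂ x := by rw [AffineMap.coe_sub]; rfl
  rw [hx] at this
  linarith
end

section
/- Among the subsets J₀ ⊆ Fin (n+2) for which the family (q(i))_{i ∈ J₀} is affinely dependent (i.e. not affinely independent), there is a unique inclusion-minimal one, and it equals the support { i : w(i) ≠ 0 } of any nonzero affine relation w for q. -/
/-- `w` is an affine relation for `q`: `Σ_i w i = 0` and `Σ_i w i • q i = 0`. -/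
def IsAffineRelation (n : ℕ) (q : Fin (n + 2) → (Fin n → ℝ))
    (w : Fin (n + 2) → ℝ) : Prop :=
  (∑ i, w i) = 0 ∧ (∑ i, w i • q i) = 0

lemma dep_of_rel (n : ℕ) (q : Fin (n + 2) → (Fin n → ℝ)) (u : Fin (n + 2) → ℝ)
    (hu : IsAffineRelation n q u) (hne : u ≠ 0) (J : Finset (Fin (n + 2)))
    (hsupp : ∀ i, u i ≠ 0 → i ∈ J) :
    ¬ AffineIndependent ℝ (fun i : J => q i) := by
  intro hind
  rw [affineIndependent_iff] at hind
  obtain ⟨i₀, hi₀⟩ := Function.ne_iff.mp hne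
  have hi₀ : u i₀ ≠ 0 := hi₀
  have h1 : ∑ i : J, u i = 0 := by
    rw [Finset.sum_coe_sort J u]
    rw [Finset.sum_subset (Finset.subset_univ J) (fun x _ hx => by
      by_contra h; exact hx (hsupp x h))]
    exact hu.1
  have h2 : ∑ i : J, u i • q i = 0 := by
    rw [Finset.sum_coe_sort J (fun i => u i • q i)]
    rw [Finset.sum_subset (Finset.subset_univ J) (fun x _ hx => by
      have : u x = 0 := by by_contra h; exact hx (hsupp x h)
      simp [this])]
    exact hu.2
  exact hi₀ (hind Finset.univ (fun i => u i) h1 h2 ⟨i₀, hsupp i₀ hi₀⟩ (Finset.mem_univ _))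

lemma rel_of_dep (n : ℕ) (q : Fin (n + 2) → (Fin n → ℝ)) (J : Finset (Fin (n + 2)))
    (hdep : ¬ AffineIndependent ℝ (fun i : J => q i)) :
    ∃ u, IsAffineRelation n q u ∧ u ≠ 0 ∧ ∀ i, u i ≠ 0 → i ∈ J := by
  rw [affineIndependent_iff] at hdep
  push_neg at hdep
  obtain ⟨s, w', h0, hw, i₀, hi₀s, hi₀⟩ := hdep
  refine ⟨fun j => ∑ i ∈ s, if (i : Fin (n + 2)) = j then w' i else 0, ⟨?_, ?_⟩, ?_, ?_⟩
  · have key : ∑ i ∈ s, ∑ j, (if (i : Fin (n + 2)) = j then w' i else 0) = ∑ i ∈ s, w' i :=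
      Finset.sum_congr rfl fun i _ => by rw [Finset.sum_ite_eq]; simp
    rw [Finset.sum_comm, key, h0]
  · have : ∀ j, (∑ i ∈ s, if (i : Fin (n + 2)) = j then w' i else 0) • q j
        = ∑ i ∈ s, if (i : Fin (n + 2)) = j then w' i • q j else 0 := by
      intro j
      rw [Finset.sum_smul]
      exact Finset.sum_congr rfl fun i _ => by split <;> simp
    simp_rw [this]
    have key : ∑ i ∈ s, ∑ j, (if (i : Fin (n + 2)) = j then w' i • q j else 0)
        = ∑ i ∈ s, w' i • q i := by
      refine Finset.sum_congr rfl fun i _ => ?_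
      have : ∀ j, (if (i : Fin (n + 2)) = j then w' i • q j else 0)
          = if (i : Fin (n + 2)) = j then w' i • q (i : Fin (n + 2)) else 0 := by
        intro j; split <;> simp_all
      simp_rw [this]
      rw [Finset.sum_ite_eq]; simp
    rw [Finset.sum_comm, key, hw]
  · intro h
    have := congrFun h (i₀ : Fin (n + 2))
    simp only [Pi.zero_apply] at this
    simp only [Subtype.coe_inj] at this
    rw [Finset.sum_ite_eq' s i₀ w'] at this
    rw [if_pos hi₀s] at this
    exact hi₀ this
  · intro j hj
    by_contra hjJ
    apply hj
    refine Finset.sum_eq_zero fun i _ => ?_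
    have : (i : Fin (n + 2)) ≠ j := fun h => hjJ (h ▸ i.2)
    simp [this]


/-- Among the subsets `J₀ ⊆ Fin (n+2)` on which `q` is affinely dependent, there is a
unique inclusion-minimal one, and it equals the support of any nonzero affine
relation for `q`. -/
theorem unique_minimal_dependent_subset (n : ℕ) (q : Fin (n + 2) → (Fin n → ℝ))
    (hq : affineSpan ℝ (Set.range q) = ⊤) :
    ∃ J₀ : Finset (Fin (n + 2)),
      (¬ AffineIndependent ℝ (fun i : J₀ => q i) ∧
        ∀ J : Finset (Fin (n + 2)), J ⊂ J₀ → AffineIndependent ℝ (fun i : J => q i)) ∧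
      (∀ J : Finset (Fin (n + 2)),
        (¬ AffineIndependent ℝ (fun i : J => q i) ∧
          ∀ J' : Finset (Fin (n + 2)), J' ⊂ J → AffineIndependent ℝ (fun i : J' => q i)) →
        J = J₀) ∧
      (∀ w : Fin (n + 2) → ℝ, IsAffineRelation n q w → w ≠ 0 →
        J₀ = Finset.univ.filter fun i => w i ≠ 0) := by
  classical
  -- the linear map whose kernel is the space of affine relations
  set L : (Fin (n + 2) → ℝ) →ₗ[ℝ] ℝ × (Fin n → ℝ) :=
    { toFun := fun w => (∑ i, w i, ∑ i, w i • q i)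
      map_add' := by
        intro a b
        simp [add_smul, Finset.sum_add_distrib, Prod.ext_iff]
      map_smul' := by
        intro c a
        simp [smul_smul, Finset.mul_sum, Prod.ext_iff, Finset.smul_sum] } with hL
  have hker : ∀ u, u ∈ LinearMap.ker L ↔ IsAffineRelation n q u := by
    intro u
    simp [hL, LinearMap.mem_ker, Prod.ext_iff, IsAffineRelation]
  have hsurj : Function.Surjective L := by
    rintro ⟨c, v⟩
    have hp : (v + (1 - c) • q 0 : Fin n → ℝ) ∈ affineSpan ℝ (Set.range q) := by
      rw [hq]; trivial
    obtain ⟨u, hu1, hu2⟩ := eq_affineCombination_of_mem_affineSpan_of_fintype hp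
    rw [Finset.affineCombination_eq_linear_combination _ _ _ hu1] at hu2
    set e : Fin (n + 2) → ℝ := fun j => if j = 0 then 1 else 0 with he
    refine ⟨fun j => u j + (c - 1) * e j, ?_⟩
    have hs1 : ∑ i, e i = 1 := by simp [he]
    have hs2 : ∑ i, e i • q i = q 0 := by
      simp [he, ite_smul]
    simp only [hL, LinearMap.coe_mk, AddHom.coe_mk, Pi.add_apply, Pi.smul_apply,
      smul_eq_mul, Prod.ext_iff]
    constructor
    · rw [Finset.sum_add_distrib, hu1]
      rw [← Finset.mul_sum, hs1]
      ring
    · simp_rw [add_smul, mul_smul]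
      rw [Finset.sum_add_distrib, ← hu2, ← Finset.smul_sum, hs2]
      module
  have hrank : Module.finrank ℝ (LinearMap.ker L) = 1 := by
    have h := LinearMap.finrank_range_add_finrank_ker L
    rw [LinearMap.range_eq_top.mpr hsurj, finrank_top] at h
    simp at h
    omega
  have hne : LinearMap.ker L ≠ ⊥ := by
    intro h
    rw [h] at hrank
    simp at hrank
  obtain ⟨w₀, hw₀mem, hw₀ne⟩ := Submodule.exists_mem_ne_zero_of_ne_bot hne
  have hprop : ∀ u, IsAffineRelation n q u → u ≠ 0 → ∃ c : ℝ, c ≠ 0 ∧ u = c • w₀ := by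
    intro u hu hune
    have hspan : Submodule.span ℝ {w₀} = LinearMap.ker L :=
      Submodule.eq_of_le_of_finrank_eq ((Submodule.span_singleton_le_iff_mem _ _).mpr hw₀mem)
        (by rw [hrank, finrank_span_singleton hw₀ne])
    have hmem : u ∈ Submodule.span ℝ {w₀} := hspan ▸ (hker u).mpr hu
    obtain ⟨c, hc⟩ := Submodule.mem_span_singleton.mp hmem
    refine ⟨c, ?_, hc.symm⟩
    rintro rfl
    rw [zero_smul] at hc
    exact hune hc.symm
  have hw₀rel : IsAffineRelation n q w₀ := (hker w₀).mp hw₀mem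
  set J₀ : Finset (Fin (n + 2)) := Finset.univ.filter fun i => w₀ i ≠ 0 with hJ₀
  have hmemJ₀ : ∀ i, i ∈ J₀ ↔ w₀ i ≠ 0 := by intro i; simp [hJ₀]
  -- support of a scalar multiple
  have hsuppeq : ∀ (u : Fin (n + 2) → ℝ) (c : ℝ), c ≠ 0 → u = c • w₀ →
      (Finset.univ.filter fun i => u i ≠ 0) = J₀ := by
    rintro u c hc rfl
    ext i
    simp [hJ₀, hc]
  have hdepJ₀ : ¬ AffineIndependent ℝ (fun i : J₀ => q i) :=
    dep_of_rel n q w₀ hw₀rel hw₀ne J₀ fun i hi => (hmemJ₀ i).mpr hi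
  -- any dependent J contains J₀
  have hcont : ∀ J : Finset (Fin (n + 2)), ¬ AffineIndependent ℝ (fun i : J => q i) →
      J₀ ⊆ J := by
    intro J hJ
    obtain ⟨u, hurel, hune, husupp⟩ := rel_of_dep n q J hJ
    obtain ⟨c, hc, hcu⟩ := hprop u hurel hune
    intro i hi
    apply husupp
    rw [hcu]
    simp only [Pi.smul_apply, smul_eq_mul]
    exact mul_ne_zero hc ((hmemJ₀ i).mp hi)
  refine ⟨J₀, ⟨hdepJ₀, ?_⟩, ?_, ?_⟩
  · intro J hJ
    by_contra hdep
    exact hJ.not_subset (hcont J hdep)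
  · rintro J ⟨hJdep, hJmin⟩
    by_contra hne
    have hsub : J₀ ⊂ J := lt_of_le_of_ne (hcont J hJdep) fun h => hne h.symm
    exact hdepJ₀ (hJmin J₀ hsub)
  · intro w hwrel hwne
    obtain ⟨c, hc, hcw⟩ := hprop w hwrel hwne
    exact (hsuppeq w c hc hcw).symm
end

section
/- Let w be a nonzero affine relation for q. Then the volume of the convex hull of the whole configuration is simultaneously decomposed by the simplices omitting the positively-weighted points and by those omitting the negatively-weighted points: Σ_{i : w(i) > 0} vol( conv( q(Fin (n+2) ∖ {i}) ) ) = vol( conv( q(Fin (n+2)) ) ) = Σ_{i : w(i) < 0} vol( conv( q(Fin (n+2) ∖ {i}) ) ), where vol denotes n-dimensional Lebesgue measure in ℝⁿ. -/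
/-!
The affine relations of `n + 2` points spanning `ℝⁿ` form a line, spanned by `w`. Convex
weights `λ` of a point of the hull can be moved along `-w` until the first coordinate with
`w i > 0` vanishes, so the simplices omitting a positively weighted point cover the hull. Two
of them, omitting `i` and `j`, meet only in the hull of the remaining `n` points: weights of a
common point differ by some `t • w`, and the signs at `i` and `j` force `t = 0`. That hull lies
in a hyperplane, so the cover is almost disjoint. Replacing `w` by `-w` gives the second
decomposition.
-/

open MeasureTheory

open Module (finrank)

section AffineRelations

variable (𝕜 : Type*) {ι E : Type*} [Field 𝕜] [Fintype ι] [AddCommGroup E] [Module 𝕜 E]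

def affineRelations (q : ι → E) : Submodule 𝕜 (ι → 𝕜) :=
  LinearMap.ker (Fintype.linearCombination 𝕜 fun i => ((1 : 𝕜), q i))

variable {𝕜}

theorem mem_affineRelations_iff {q : ι → E} {w : ι → 𝕜} :
    w ∈ affineRelations 𝕜 q ↔ ∑ i, w i = 0 ∧ ∑ i, w i • q i = 0 := by
  simp [affineRelations, Fintype.linearCombination_apply, Prod.ext_iff, Prod.fst_sum,
    Prod.snd_sum]

theorem span_range_one_prod_eq_top {q : ι → E} (hq : affineSpan 𝕜 (Set.range q) = ⊤) :
    Submodule.span 𝕜 (Set.range fun i => ((1 : 𝕜), q i)) = ⊤ := by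
  have hone (x : E) : ((1 : 𝕜), x) ∈ Submodule.span 𝕜 (Set.range fun i => ((1 : 𝕜), q i)) := by
    obtain ⟨c, hc, rfl⟩ :=
      eq_affineCombination_of_mem_affineSpan_of_fintype (hq ▸ AffineSubspace.mem_top 𝕜 E x)
    rw [Submodule.mem_span_range_iff_exists_fun]
    exact ⟨c, by simp [Prod.ext_iff, Prod.fst_sum, Prod.snd_sum, hc,
      Finset.affineCombination_eq_linear_combination _ _ _ hc]⟩
  refine eq_top_iff.2 fun ⟨c, x⟩ _ => ?_
  have hcx : (c, x) = ((1 : 𝕜), x) + (c - 1) • ((1 : 𝕜), (0 : E)) := by simp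
  rw [hcx]
  exact add_mem (hone x) (Submodule.smul_mem _ _ (hone 0))

theorem finrank_affineRelations_add_finrank_add_one [FiniteDimensional 𝕜 E] {q : ι → E}
    (hq : affineSpan 𝕜 (Set.range q) = ⊤) :
    finrank 𝕜 (affineRelations 𝕜 q) + finrank 𝕜 E + 1 = Fintype.card ι := by
  have h := LinearMap.finrank_range_add_finrank_ker
    (Fintype.linearCombination 𝕜 fun i => ((1 : 𝕜), q i))
  rw [Fintype.range_linearCombination, span_range_one_prod_eq_top hq, finrank_top,
    Module.finrank_prod, Module.finrank_self, Module.finrank_fintype_fun_eq_card] at h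
  rw [affineRelations]
  omega

theorem affineRelations_eq_span_singleton [FiniteDimensional 𝕜 E] {q : ι → E}
    (hq : affineSpan 𝕜 (Set.range q) = ⊤) (hcard : Fintype.card ι = finrank 𝕜 E + 2)
    {w : ι → 𝕜} (hw : w ∈ affineRelations 𝕜 q) (hw0 : w ≠ 0) :
    affineRelations 𝕜 q = 𝕜 ∙ w := by
  refine (Submodule.eq_of_le_of_finrank_eq
    ((Submodule.span_singleton_le_iff_mem _ _).2 hw) ?_).symm
  have := finrank_affineRelations_add_finrank_add_one hq
  rw [finrank_span_singleton hw0]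
  omega

end AffineRelations

section ConvexHull

variable {𝕜 ι E : Type*} [Field 𝕜] [LinearOrder 𝕜] [IsStrictOrderedRing 𝕜] [Fintype ι]
  [AddCommGroup E] [Module 𝕜 E]

theorem convexHull_image_eq_image_stdSimplex (q : ι → E) (S : Set ι) :
    convexHull 𝕜 (q '' S) =
      Fintype.linearCombination 𝕜 q '' {lam ∈ stdSimplex 𝕜 ι | ∀ k ∉ S, lam k = 0} := by
  classical
  refine (convexHull_min ?_ ?_).antisymm ?_
  · rintro _ ⟨k, hk, rfl⟩
    refine ⟨Pi.single k 1, ⟨single_mem_stdSimplex 𝕜 k, fun l hl => ?_⟩, by simp⟩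
    exact Pi.single_eq_of_ne (ne_of_mem_of_not_mem hk hl).symm _
  · refine ((convex_stdSimplex 𝕜 ι).inter ?_).linear_image _
    exact fun x hx y hy a b _ _ _ k hk => by simp [hx k hk, hy k hk]
  · rintro _ ⟨lam, ⟨hlam, hS⟩, rfl⟩
    have hsupp : ∀ k ∈ Finset.univ, lam k ≠ 0 → k ∈ S :=
      fun k _ hk => by_contra fun hkS => hk (hS k hkS)
    rw [Fintype.linearCombination_apply,
      ← Finset.sum_filter_of_ne fun k hk h => hsupp k hk (left_ne_zero_of_smul h)]
    refine (convex_convexHull 𝕜 _).sum_mem (fun k _ => hlam.1 k) ?_ fun k hk => ?_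
    · rw [Finset.sum_filter_of_ne hsupp, hlam.2]
    · exact subset_convexHull 𝕜 _ ⟨k, by simpa using hk, rfl⟩

theorem exists_pos_and_nonneg_sub_div_smul {lam w : ι → 𝕜} (hlam : 0 ≤ lam)
    (hw : ∃ i, 0 < w i) : ∃ i, 0 < w i ∧ 0 ≤ lam - (lam i / w i) • w := by
  classical
  obtain ⟨i, hi, hmin⟩ := (Finset.univ.filter (0 < w ·)).exists_min_image
    (fun i => lam i / w i) (by simpa [Finset.filter_nonempty_iff] using hw)
  simp only [Finset.mem_filter, Finset.mem_univ, true_and] at hi hmin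
  refine ⟨i, hi, fun k => ?_⟩
  simp only [Pi.zero_apply, Pi.sub_apply, Pi.smul_apply, smul_eq_mul, sub_nonneg]
  rcases lt_or_ge 0 (w k) with hk | hk
  · exact (le_div_iff₀ hk).1 (hmin k hk)
  · exact (mul_nonpos_of_nonneg_of_nonpos (div_nonneg (hlam i) hi.le) hk).trans (hlam k)

theorem convexHull_range_eq_biUnion_convexHull_image_ne {q : ι → E} {w : ι → 𝕜}
    (hw : w ∈ affineRelations 𝕜 q) (hw0 : w ≠ 0) :
    convexHull 𝕜 (Set.range q) =
      ⋃ i ∈ Finset.univ.filter (fun i => 0 < w i), convexHull 𝕜 (q '' {j | j ≠ i}) := by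
  rw [mem_affineRelations_iff] at hw
  refine subset_antisymm ?_
    (Set.iUnion₂_subset fun i _ => convexHull_mono (Set.image_subset_range _ _))
  rw [← Set.image_univ, convexHull_image_eq_image_stdSimplex]
  rintro _ ⟨lam, ⟨hlam, -⟩, rfl⟩
  have hpos : ∃ i, 0 < w i := by
    simpa using Finset.exists_pos_of_sum_zero_of_exists_nonzero w hw.1
      (by simpa [funext_iff] using hw0)
  obtain ⟨i, hi, hnonneg⟩ := exists_pos_and_nonneg_sub_div_smul hlam.1 hpos
  refine Set.mem_iUnion₂.2 ⟨i, by simpa using hi, ?_⟩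
  rw [convexHull_image_eq_image_stdSimplex]
  refine ⟨lam - (lam i / w i) • w, ⟨⟨hnonneg, ?_⟩, fun k hk => ?_⟩, ?_⟩
  · simp [Finset.sum_sub_distrib, ← Finset.mul_sum, hw.1, hlam.2]
  · obtain rfl : k = i := by simpa using hk
    simp [div_mul_cancel₀ _ hi.ne']
  · simp [Fintype.linearCombination_apply, sub_smul, mul_smul, Finset.sum_sub_distrib,
      ← Finset.smul_sum, hw.2]

theorem convexHull_image_ne_inter_subset {q : ι → E} {w : ι → 𝕜}
    (hw : affineRelations 𝕜 q = 𝕜 ∙ w) {i j : ι} (hi : 0 < w i) (hj : 0 < w j) :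
    convexHull 𝕜 (q '' {k | k ≠ i}) ∩ convexHull 𝕜 (q '' {k | k ≠ j}) ⊆
      convexHull 𝕜 (q '' ({i, j} : Set ι)ᶜ) := by
  simp only [convexHull_image_eq_image_stdSimplex]
  rintro _ ⟨⟨lam, ⟨hlam, hlam_i⟩, rfl⟩, ⟨mu, ⟨hmu, hmu_j⟩, hx⟩⟩
  replace hlam_i : lam i = 0 := hlam_i i (by simp)
  replace hmu_j : mu j = 0 := hmu_j j (by simp)
  obtain ⟨t, ht⟩ : ∃ t : 𝕜, t • w = mu - lam := by
    rw [← Submodule.mem_span_singleton, ← hw, mem_affineRelations_iff]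
    refine ⟨by simp [Finset.sum_sub_distrib, hlam.2, hmu.2], ?_⟩
    simpa [Fintype.linearCombination_apply, sub_smul, Finset.sum_sub_distrib, sub_eq_zero]
      using hx
  have hti := congrFun ht i
  have htj := congrFun ht j
  simp only [Pi.smul_apply, smul_eq_mul, Pi.sub_apply, hlam_i, hmu_j] at hti htj
  -- `t • w = mu - lam` is `≥ 0` at `i` and `≤ 0` at `j`
  have ht0 : t = 0 := le_antisymm (by nlinarith [hlam.1 j]) (by nlinarith [hmu.1 i])
  refine ⟨lam, ⟨hlam, fun k hk => ?_⟩, rfl⟩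
  obtain rfl | rfl : k = i ∨ k = j := by
    simpa only [Set.mem_compl_iff, Set.mem_insert_iff, Set.mem_singleton_iff, not_not] using hk
  · exact hlam_i
  · simpa [ht0] using htj

end ConvexHull

section Volume

variable {E : Type*} [NormedAddCommGroup E] [NormedSpace ℝ E] [MeasurableSpace E] [BorelSpace E]
  [FiniteDimensional ℝ E] (μ : Measure E) [μ.IsAddHaarMeasure]

theorem addHaar_convexHull_eq_zero_of_card_le {s : Finset E} (hs : s.card ≤ finrank ℝ E) :
    μ (convexHull ℝ (s : Set E)) = 0 := by
  classical
  refine measure_mono_null (convexHull_subset_affineSpan _)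
    (Measure.addHaar_affineSubspace μ _ fun h => ?_)
  rcases s.eq_empty_or_nonempty with rfl | hne
  · simp only [Finset.coe_empty, AffineSubspace.span_empty] at h
    exact AffineSubspace.bot_ne_top ℝ E E h
  · have hpos := hne.card_pos
    have hle := finrank_vectorSpan_image_finset_le ℝ id s
      (Nat.sub_add_cancel hpos).symm
    rw [Finset.image_id, AffineSubspace.vectorSpan_eq_top_of_affineSpan_eq_top ℝ E E h,
      finrank_top] at hle
    omega

theorem addHaar_convexHull_range_eq_sum {ι : Type*} [Fintype ι] {q : ι → E}
    (hq : affineSpan ℝ (Set.range q) = ⊤) (hcard : Fintype.card ι = finrank ℝ E + 2)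
    {w : ι → ℝ} (hw : w ∈ affineRelations ℝ q) (hw0 : w ≠ 0) :
    μ (convexHull ℝ (Set.range q)) =
      ∑ i ∈ Finset.univ.filter (fun i => 0 < w i), μ (convexHull ℝ (q '' {j | j ≠ i})) := by
  classical
  have hspan := affineRelations_eq_span_singleton hq hcard hw hw0
  rw [convexHull_range_eq_biUnion_convexHull_image_ne hw hw0]
  refine measure_biUnion_finset₀ (fun i hi j hj hij => ?_)
    fun i _ => (convex_convexHull ℝ _).nullMeasurableSet μ
  simp only [Finset.coe_filter, Finset.mem_univ, true_and, Set.mem_ofPred_eq] at hi hj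
  refine measure_mono_null (convexHull_image_ne_inter_subset hspan hi hj) ?_
  rw [← Finset.coe_pair, ← Finset.coe_compl, ← Finset.coe_image]
  refine addHaar_convexHull_eq_zero_of_card_le μ (Finset.card_image_le.trans ?_)
  rw [Finset.card_compl, Finset.card_pair hij]
  omega

end Volume

/-- For a nonzero affine relation `w` of a configuration `q` of `n+2` points affinely
spanning `ℝⁿ`, the volume of the convex hull of the whole configuration is
simultaneously decomposed by the simplices omitting the positively-weighted points
and by those omitting the negatively-weighted points. -/
theorem volume_decomposition_by_circuit (n : ℕ) (q : Fin (n + 2) → (Fin n → ℝ))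
    (hq : affineSpan ℝ (Set.range q) = ⊤)
    (w : Fin (n + 2) → ℝ) (hw : IsAffineRelation n q w) (hw0 : w ≠ 0) :
    (∑ i ∈ Finset.univ.filter (fun i => 0 < w i),
        (volume (convexHull ℝ (q '' {j | j ≠ i}))).toReal) =
      (volume (convexHull ℝ (Set.range q))).toReal ∧
    (∑ i ∈ Finset.univ.filter (fun i => w i < 0),
        (volume (convexHull ℝ (q '' {j | j ≠ i}))).toReal) =
      (volume (convexHull ℝ (Set.range q))).toReal := by
  have hrel : w ∈ affineRelations ℝ q := mem_affineRelations_iff.2 hw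
  have hcard : Fintype.card (Fin (n + 2)) = finrank ℝ (Fin n → ℝ) + 2 := by simp
  have hfinite (i : Fin (n + 2)) : volume (convexHull ℝ (q '' {j | j ≠ i})) ≠ ⊤ :=
    ((Set.toFinite _).image q).isCompact_convexHull ℝ |>.measure_lt_top.ne
  constructor
  · rw [← ENNReal.toReal_sum fun i _ => hfinite i,
      addHaar_convexHull_range_eq_sum volume hq hcard hrel hw0]
  · rw [← ENNReal.toReal_sum fun i _ => hfinite i,
      addHaar_convexHull_range_eq_sum volume hq hcard (neg_mem hrel) (neg_ne_zero.2 hw0)]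
    simp only [Pi.neg_apply, neg_pos]
end

section
/- For n = 0 the basecondary polytope is the base polytope of F (up to a standard-simplex Minkowski summand); concretely: when n = 0, every affine map γ : ℝ⁰ → ℝ is a constant c with γ(0) = c and the 0-dimensional lattice volume of the convex hull of any nonempty subset of ℝ⁰ equals 1, and then for every λ : Fin m → ℝ and every permutation σ of Fin m sorting for λ, the basecondary function satisfies 𝓑_F(λ) = Σ_c c·( F({i : λ(i) ≥ c}) − F({i : λ(i) > c}) ) = Σ_{i=1}^m λ(σ(i))·(F(Y_i^σ) − F(Y_{i−1}^σ)), where the first (finitely supported) sum is over all c ∈ ℝ; that is, 𝓑_F coincides with the Lovász extension of F. -/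
open Classical in
/-- The `0`-dimensional lattice volume in `ℝ⁰`: `1` on nonempty sets, `0` on `∅`. -/
noncomputable def vol0 (s : Set (Fin 0 → ℝ)) : ℝ := if s.Nonempty then 1 else 0

/-- The unique map `Fin m → ℝ⁰`. -/
def A0 (m : ℕ) : Fin m → (Fin 0 → ℝ) := fun _ => 0

/-- The term `T(λ,γ)` of the basecondary function for `n = 0`. -/
noncomputable def Tterm0 {m : ℕ} (F : Finset (Fin m) → ℝ) (lam : Fin m → ℝ)
    (γ : (Fin 0 → ℝ) →ᵃ[ℝ] ℝ) : ℝ :=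
  γ 0 *
    (F (Finset.univ.filter fun i => 0 ≤ lam i - γ (A0 m i)) -
      F (Finset.univ.filter fun i => 0 < lam i - γ (A0 m i))) *
    vol0 (A0 m '' {i | ∀ j, lam j - γ (A0 m j) ≤ lam i - γ (A0 m i)})

/-- The basecondary function for `n = 0`: `𝓑_F(λ) = Σ_γ T(λ,γ)`, a finitely
supported sum over all affine maps `γ : ℝ⁰ → ℝ` (i.e. over all constants). -/
noncomputable def basecondary0 {m : ℕ} (F : Finset (Fin m) → ℝ)
    (lam : Fin m → ℝ) : ℝ :=
  ∑ᶠ γ : (Fin 0 → ℝ) →ᵃ[ℝ] ℝ, Tterm0 F lam γ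

open Finset

section Aux
variable {m : ℕ}

/-- A down-closed predicate on `Fin m` is an initial segment. -/
lemma downset_iff (P : Fin m → Prop) [DecidablePred P]
    (hP : ∀ i j : Fin m, i ≤ j → P j → P i) (i : Fin m) :
    P i ↔ (i : ℕ) < (univ.filter P).card := by
  constructor
  · intro h
    have hsub : Finset.Iic i ⊆ univ.filter P := fun j hj => by
      simp only [mem_filter, mem_univ, true_and]
      exact hP j i (Finset.mem_Iic.mp hj) h
    have := Finset.card_le_card hsub
    rw [Fin.card_Iic] at this
    omega
  · intro h
    by_contra hni
    have hsub : univ.filter P ⊆ Finset.Iio i := fun j hj => by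
      simp only [mem_filter, mem_univ, true_and] at hj
      rw [Finset.mem_Iio]
      by_contra hij
      exact hni (hP i j (le_of_not_gt hij) hj)
    have := Finset.card_le_card hsub
    rw [Fin.card_Iio] at this
    omega

variable (lam : Fin m → ℝ) (σ : Equiv.Perm (Fin m)) (hσ : ∀ i j : Fin m, i ≤ j → lam (σ j) ≤ lam (σ i))

lemma card_filter_comp (Q : ℝ → Prop) [DecidablePred Q] :
    (univ.filter fun i => Q (lam (σ i))).card = (univ.filter fun i => Q (lam i)).card := by
  have : (univ.filter fun i => Q (lam i)) = (univ.filter fun i => Q (lam (σ i))).image σ := by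
    ext j
    simp only [mem_image, mem_filter, mem_univ, true_and]
    constructor
    · intro h; exact ⟨σ.symm j, by simpa using h, by simp⟩
    · rintro ⟨i, hi, rfl⟩; exact hi
  rw [this, Finset.card_image_of_injective _ σ.injective]

include hσ in
lemma mem_iff_lt (Q : ℝ → Prop) [DecidablePred Q] (hQ : ∀ x y : ℝ, x ≤ y → Q x → Q y) (i : Fin m) :
    Q (lam (σ i)) ↔ (i : ℕ) < (univ.filter fun j => Q (lam j)).card := by
  rw [← card_filter_comp lam σ Q]
  exact downset_iff _ (fun i j hij h => hQ _ _ (hσ i j hij) h) i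

include hσ in
lemma Yset_filter (Q : ℝ → Prop) [DecidablePred Q] (hQ : ∀ x y : ℝ, x ≤ y → Q x → Q y) :
    Yset σ ((univ.filter fun j => Q (lam j)).card) = univ.filter fun j => Q (lam j) := by
  ext j
  simp only [Yset, mem_image, mem_filter, mem_univ, true_and]
  constructor
  · rintro ⟨i, hi, rfl⟩
    exact (mem_iff_lt lam σ hσ Q hQ i).mpr hi
  · intro h
    exact ⟨σ.symm j, by simpa using (mem_iff_lt lam σ hσ Q hQ (σ.symm j)).mp (by simpa using h), by simp⟩

lemma tele (f : ℕ → ℝ) {a b : ℕ} (h : a ≤ b) :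
    ∑ k ∈ Finset.Ico a b, (f (k + 1) - f k) = f b - f a := by
  induction b, h using Nat.le_induction with
  | base => simp
  | succ b hb ih => rw [Finset.sum_Ico_succ_top hb, ih]; ring

end Aux
open Finset in
/-- For `n = 0` the basecondary function equals
`Σ_c c · (F{λ ≥ c} − F{λ > c})` and coincides with the Lovász extension of `F`,
i.e. with the support function of the base polytope of `F` (modulo the
standard-simplex Minkowski summand, which is absorbed in the Lovász formula). -/
theorem basecondary_dim0_is_lovasz (m : ℕ) (hm : 1 < m)
    (F : Finset (Fin m) → ℝ) (hF : F ∅ = 0)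
    (lam : Fin m → ℝ) (σ : Equiv.Perm (Fin m)) (hσ : Sorting lam σ) :
    basecondary0 F lam =
      (∑ᶠ c : ℝ, c * (F (Finset.univ.filter fun i => c ≤ lam i) -
        F (Finset.univ.filter fun i => c < lam i))) ∧
    basecondary0 F lam = lovaszSum F lam σ := by
  classical
  set g : ℝ → ℝ := fun c => c * (F (univ.filter fun i => c ≤ lam i) -
      F (univ.filter fun i => c < lam i)) with hg
  -- constant affine maps
  have hsub : ∀ γ : (Fin 0 → ℝ) →ᵃ[ℝ] ℝ, ∀ x : Fin 0 → ℝ, γ x = γ 0 := by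
    intro γ x
    congr 1
    exact funext fun i => i.elim0
  let e : ℝ ≃ ((Fin 0 → ℝ) →ᵃ[ℝ] ℝ) :=
    { toFun := fun c => AffineMap.const ℝ (Fin 0 → ℝ) c
      invFun := fun γ => γ 0
      left_inv := fun c => rfl
      right_inv := fun γ => by ext x; exact (hsub γ x).symm }
  have hT : ∀ c : ℝ, Tterm0 F lam (e c) = g c := by
    intro c
    have hc0 : ∀ x, (e c : (Fin 0 → ℝ) →ᵃ[ℝ] ℝ) x = c := fun x => rfl
    have hne : (A0 m '' {i | ∀ j, lam j - c ≤ lam i - c}).Nonempty := by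
      refine ⟨A0 m (σ ⟨0, by omega⟩), Set.mem_image_of_mem _ ?_⟩
      intro j
      have : lam (σ (σ.symm j)) ≤ lam (σ ⟨0, by omega⟩) :=
        hσ ⟨0, by omega⟩ (σ.symm j) (by simp [Fin.le_def])
      simp only [Equiv.apply_symm_apply] at this
      linarith
    simp only [Tterm0, hc0, vol0, if_pos hne, mul_one, hg]
    congr 2
    · congr 1; ext i; simp [sub_nonneg]
    · congr 1; ext i; simp [sub_pos]
  have stepA : basecondary0 F lam = ∑ᶠ c : ℝ, g c := by
    rw [basecondary0, ← finsum_comp_equiv e]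
    exact finsum_congr hT
  -- support of g
  have hsupp : Function.support g ⊆ ↑(univ.image lam) := by
    intro c hc
    simp only [Function.mem_support] at hc
    by_contra hcn
    simp only [Finset.coe_image, Set.mem_image, coe_univ, Set.mem_univ, true_and] at hcn
    apply hc
    have hfe : (univ.filter fun i => c ≤ lam i) = (univ.filter fun i => c < lam i) := by
      ext i
      simp only [mem_filter, mem_univ, true_and]
      constructor
      · intro h
        exact lt_of_le_of_ne h fun h' => hcn ⟨i, h'.symm⟩
      · exact le_of_lt
    rw [hg]
    simp [hfe]
  have hsum : (∑ᶠ c : ℝ, g c) = ∑ c ∈ univ.image lam, g c :=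
    finsum_eq_finset_sum_of_support_subset g hsupp
  -- fiberwise
  have stepC : lovaszSum F lam σ = ∑ c ∈ univ.image lam, g c := by
    rw [lovaszSum,
      ← Finset.sum_fiberwise_of_maps_to (g := fun i => lam (σ i))
        (fun i _ => Finset.mem_image_of_mem lam (mem_univ (σ i)))
        (fun i : Fin m => lam (σ i) * (F (Yset σ ((i : ℕ) + 1)) - F (Yset σ (i : ℕ))))]
    refine Finset.sum_congr rfl fun c _ => ?_
    set a := (univ.filter fun j => c < lam j).card with ha
    set b := (univ.filter fun j => c ≤ lam j).card with hb
    have hab : a ≤ b := by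
      apply Finset.card_le_card
      intro i hi
      simp only [mem_filter, mem_univ, true_and] at *
      exact le_of_lt hi
    have hbm : b ≤ m := by
      have := Finset.card_filter_le (univ : Finset (Fin m)) (fun j => c ≤ lam j)
      simpa using this
    have h1 := fun i => mem_iff_lt lam σ hσ (fun x => c ≤ x) (fun x y hxy h => h.trans hxy) i
    have h2 := fun i => mem_iff_lt lam σ hσ (fun x => c < x) (fun x y hxy h => h.trans_le hxy) i
    have hmem : ∀ i : Fin m, lam (σ i) = c ↔ (a ≤ (i : ℕ) ∧ (i : ℕ) < b) := by
      intro i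
      constructor
      · intro h
        have hnlt : ¬ c < lam (σ i) := by rw [h]; exact lt_irrefl c
        have hle : c ≤ lam (σ i) := le_of_eq h.symm
        rw [h2 i] at hnlt
        rw [h1 i] at hle
        omega
      · rintro ⟨hai, hib⟩
        have hle : c ≤ lam (σ i) := (h1 i).mpr hib
        have hnlt : ¬ c < lam (σ i) := by rw [h2 i]; omega
        exact le_antisymm (not_lt.mp hnlt) hle
    have hblock : univ.filter (fun i => lam (σ i) = c)
        = univ.filter (fun i : Fin m => a ≤ (i : ℕ) ∧ (i : ℕ) < b) := by
      ext i; simp [hmem i]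
    have hre : ∑ i ∈ univ.filter (fun i : Fin m => a ≤ (i : ℕ) ∧ (i : ℕ) < b),
        (F (Yset σ ((i : ℕ) + 1)) - F (Yset σ (i : ℕ)))
        = ∑ k ∈ Finset.Ico a b, (F (Yset σ (k + 1)) - F (Yset σ k)) := by
      refine Finset.sum_nbij' (fun i : Fin m => (i : ℕ))
        (fun k => ⟨k % m, Nat.mod_lt k (by omega)⟩) ?_ ?_ ?_ ?_ ?_
      · intro i hi
        simp only [mem_filter, mem_univ, true_and] at hi
        simp [Finset.mem_Ico, hi]
      · intro k hk
        simp only [Finset.mem_Ico] at hk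
        have : k % m = k := Nat.mod_eq_of_lt (by omega)
        simp [this, hk]
      · intro i _
        ext
        simp [Nat.mod_eq_of_lt i.isLt]
      · intro k hk
        simp only [Finset.mem_Ico] at hk
        simp [Nat.mod_eq_of_lt (show k < m by omega)]
      · intro i _; rfl
    calc ∑ i ∈ univ.filter (fun i => lam (σ i) = c),
            lam (σ i) * (F (Yset σ ((i : ℕ) + 1)) - F (Yset σ (i : ℕ)))
        = ∑ i ∈ univ.filter (fun i => lam (σ i) = c),
            c * (F (Yset σ ((i : ℕ) + 1)) - F (Yset σ (i : ℕ))) := by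
          refine Finset.sum_congr rfl fun i hi => ?_
          rw [(Finset.mem_filter.mp hi).2]
      _ = c * ∑ i ∈ univ.filter (fun i : Fin m => a ≤ (i : ℕ) ∧ (i : ℕ) < b),
            (F (Yset σ ((i : ℕ) + 1)) - F (Yset σ (i : ℕ))) := by
          rw [hblock, Finset.mul_sum]
      _ = c * (F (Yset σ b) - F (Yset σ a)) := by
          rw [hre, tele (fun k => F (Yset σ k)) hab]
      _ = g c := by
          rw [hb, ha, Yset_filter lam σ hσ (fun x => c ≤ x) (fun x y hxy h => h.trans hxy),
            Yset_filter lam σ hσ (fun x => c < x) (fun x y hxy h => h.trans_le hxy)]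
  exact ⟨stepA, stepA.trans (hsum.trans stepC.symm)⟩
end
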